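/- Let 𝒜 be an output AOE of the simplification algorithm and let Opt be an optimal AOE with Opt ≡ 𝒜, with common task set 𝒯. For distinct tasks T, T' ∈ 𝒯: if End_𝒜(T) ≠ St_𝒜(T') then End_Opt(T) ≠ St_Opt(T'). -/

import Mathlib

namespace AOEPaper

/-- An activity-on-edge graph: a directed multigraph on the vertex set `verts`,
whose task edges are indexed by the type `T` (the distinct task labels), each task `t`
being an edge from `St t` to `En t`, together with a multiset `unl` of unlabeled edges. -/
structure AOE (V T : Type) where
  verts : Finset V
  St : T → V
  En : T → V
  stMem : ∀ t, St t ∈ verts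
  enMem : ∀ t, En t ∈ verts
  unl : Multiset (V × V)
  unlMem : ∀ e ∈ unl, e.1 ∈ verts ∧ e.2 ∈ verts

/-- One-step adjacency: an unlabeled edge or a task edge from `a` to `b`. -/
def AOE.adj {V T : Type} (G : AOE V T) (a b : V) : Prop :=
  (a, b) ∈ G.unl ∨ ∃ t, G.St t = a ∧ G.En t = b

/-- The graph has no directed cycle. -/
def AOE.Acyclic {V T : Type} (G : AOE V T) : Prop :=
  ∀ v : V, ¬ Relation.TransGen G.adj v v

/-- Task `t` reaches task `t'`: `En t = St t'` or there is a directed path from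
`En t` to `St t'` (intended only for `t ≠ t'`). -/
def AOE.reach {V T : Type} (G : AOE V T) (t t' : T) : Prop :=
  Relation.ReflTransGen G.adj (G.En t) (G.St t')

/-- A sequence of tasks in which each task reaches the next. -/
def AOE.chain {V T : Type} (G : AOE V T) (l : List T) : Prop :=
  l.Chain' fun t t' => t ≠ t' ∧ G.reach t t'

/-- A potential critical path: a maximal sequence of tasks in which each task
reaches the next (not a subsequence of any other such sequence). -/
def AOE.critPath {V T : Type} (G : AOE V T) (l : List T) : Prop :=
  G.chain l ∧ ∀ l' : List T, G.chain l' → l.Sublist l' → l' = l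

/-- Two AOEs with the same task labels are equivalent if they have the same set of
potential critical paths. -/
def AOE.Equiv {V W T : Type} (G : AOE V T) (H : AOE W T) : Prop :=
  ∀ l : List T, G.critPath l ↔ H.critPath l

/-- An AOE is optimal if it minimizes the number of vertices in its equivalence class. -/
def Optimal {W T : Type} (G : AOE W T) : Prop :=
  ∀ (U : Type) (H : AOE U T), H.Acyclic → AOE.Equiv G H → G.verts.card ≤ H.verts.card

/-- The vertex map replacing `v` by `u`. -/
def mergeV {V : Type} [DecidableEq V] (u v x : V) : V := if x = v then u else x

theorem mergeV_mem {V : Type} [DecidableEq V] {S : Finset V} (u v x : V) (hx : x ∈ S) :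
    mergeV u v x ∈ insert u (S.erase v) := by
  unfold mergeV
  split_ifs with h
  · exact Finset.mem_insert_self _ _
  · exact Finset.mem_insert_of_mem (Finset.mem_erase.mpr ⟨h, hx⟩)

/-- Merge vertices `u` and `v` into the single vertex `u`. -/
def AOE.merge {V T : Type} [DecidableEq V] (G : AOE V T) (u v : V) : AOE V T where
  verts := insert u (G.verts.erase v)
  St t := mergeV u v (G.St t)
  En t := mergeV u v (G.En t)
  stMem t := mergeV_mem u v (G.St t) (G.stMem t)
  enMem t := mergeV_mem u v (G.En t) (G.enMem t)
  unl := G.unl.map fun e => (mergeV u v e.1, mergeV u v e.2)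
  unlMem := by
    intro e he
    rw [Multiset.mem_map] at he
    obtain ⟨a, ha, rfl⟩ := he
    obtain ⟨h1, h2⟩ := G.unlMem a ha
    exact ⟨mergeV_mem u v a.1 h1, mergeV_mem u v a.2 h2⟩

/-- Delete one copy of the unlabeled edge `(u, v)`. -/
def AOE.delUnl {V T : Type} [DecidableEq V] (G : AOE V T) (u v : V) : AOE V T where
  verts := G.verts
  St := G.St
  En := G.En
  stMem := G.stMem
  enMem := G.enMem
  unl := G.unl.erase (u, v)
  unlMem := fun e he => G.unlMem e (Multiset.mem_of_mem_erase he)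

/-- Rule 1 (outgoing version): `u` and `v` are distinct vertices with no outgoing task
edges and precisely the same outgoing neighbors. -/
def Rule1OutCond {V T : Type} (G : AOE V T) (u v : V) : Prop :=
  u ∈ G.verts ∧ v ∈ G.verts ∧ u ≠ v ∧
    (∀ t, G.St t ≠ u) ∧ (∀ t, G.St t ≠ v) ∧ ∀ w, G.adj u w ↔ G.adj v w

/-- Rule 1 (incoming version): `u` and `v` are distinct vertices with no incoming task
edges and precisely the same incoming neighbors. -/
def Rule1InCond {V T : Type} (G : AOE V T) (u v : V) : Prop :=
  u ∈ G.verts ∧ v ∈ G.verts ∧ u ≠ v ∧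
    (∀ t, G.En t ≠ u) ∧ (∀ t, G.En t ≠ v) ∧ ∀ w, G.adj w u ↔ G.adj w v

/-- Rule 2: `(u, v)` is an unlabeled edge and there is another directed path from `u`
to `v` not using this edge. -/
def Rule2Cond {V T : Type} [DecidableEq V] (G : AOE V T) (u v : V) : Prop :=
  (u, v) ∈ G.unl ∧ Relation.TransGen (G.delUnl u v).adj u v

/-- Rule 3: `(u, v)` is an unlabeled edge such that (i) there is no other path from `u`
to `v`; (ii) if `u` has an outgoing task then `v` has no incoming edge other than `(u,v)`;
(iii) if `v` has an incoming task then `u` has no outgoing edge other than `(u,v)`;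
(iv) every incoming neighbor of `v` has a path to every outgoing neighbor of `u`. -/
def Rule3Cond {V T : Type} [DecidableEq V] (G : AOE V T) (u v : V) : Prop :=
  (u, v) ∈ G.unl ∧
  (¬ Relation.TransGen (G.delUnl u v).adj u v) ∧
  ((∃ t, G.St t = u) → (∀ t, G.En t ≠ v) ∧ ∀ w, (w, v) ∈ G.unl → w = u) ∧
  ((∃ t, G.En t = v) → (∀ t, G.St t ≠ u) ∧ ∀ w, (u, w) ∈ G.unl → w = v) ∧
  ∀ w z, G.adj w v → G.adj u z → Relation.ReflTransGen G.adj w z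

/-- One application of a simplification rule. -/
inductive Step {V T : Type} [DecidableEq V] : AOE V T → AOE V T → Prop
  | rule1out {G : AOE V T} (u v : V) : Rule1OutCond G u v → Step G (G.merge u v)
  | rule1in {G : AOE V T} (u v : V) : Rule1InCond G u v → Step G (G.merge u v)
  | rule2 {G : AOE V T} (u v : V) : Rule2Cond G u v → Step G (G.delUnl u v)
  | rule3 {G : AOE V T} (u v : V) : Rule3Cond G u v → Step G ((G.delUnl u v).merge u v)

/-- A canonical AOE: the naive expansion of an activity-on-node graph. Each task has its
own pair of endpoint vertices, all pairwise distinct; there are a global start vertex `s`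
and a global end vertex `e`; unlabeled edges other than those leaving `s` or entering `e`
go from end vertices of tasks to start vertices of tasks; `s` has unlabeled edges to
exactly the vertices whose only incoming edges come from `s`, and `e` has unlabeled edges
from exactly the vertices whose only outgoing edges go to `e`. -/
def Canonical {V T : Type} [DecidableEq V] [Fintype T] (G : AOE V T) : Prop :=
  G.Acyclic ∧ G.unl.Nodup ∧
  Function.Injective G.St ∧ Function.Injective G.En ∧
  (∀ t t' : T, G.St t ≠ G.En t') ∧
  ∃ s e : V, s ≠ e ∧ s ∈ G.verts ∧ e ∈ G.verts ∧
    (∀ t, G.St t ≠ s ∧ G.St t ≠ e ∧ G.En t ≠ s ∧ G.En t ≠ e) ∧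
    (G.verts =
      insert s (insert e (Finset.image G.St Finset.univ ∪ Finset.image G.En Finset.univ))) ∧
    (∀ a b : V, (a, b) ∈ G.unl → a ≠ s → b ≠ e → (∃ t, G.En t = a) ∧ ∃ t', G.St t' = b) ∧
    (∀ b : V, (s, b) ∈ G.unl ↔
      b ∈ G.verts ∧ b ≠ s ∧ (∀ t, G.En t ≠ b) ∧ ∀ a, (a, b) ∈ G.unl → a = s) ∧
    (∀ a : V, (a, e) ∈ G.unl ↔
      a ∈ G.verts ∧ a ≠ e ∧ (∀ t, G.St t ≠ a) ∧ ∀ b, (a, b) ∈ G.unl → b = e)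

/-- An output AOE: obtained from a canonical AOE by a finite sequence of rule
applications, such that no rule can still be applied. -/
def IsOutput {V T : Type} [DecidableEq V] [Fintype T] (G A : AOE V T) : Prop :=
  Canonical G ∧ Relation.ReflTransGen Step G A ∧ ∀ B : AOE V T, ¬ Step A B

theorem mergeSetV_mem {V : Type} [DecidableEq V] {S : Finset V} (C : Finset V) (c x : V)
    (hx : x ∈ S) : (if x ∈ C then c else x) ∈ insert c (S \ C) := by
  split_ifs with h
  · exact Finset.mem_insert_self _ _
  · exact Finset.mem_insert_of_mem (Finset.mem_sdiff.mpr ⟨hx, h⟩)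

/-- Merge all vertices of `C` into the single vertex `c`. -/
def AOE.mergeSet {V T : Type} [DecidableEq V] (G : AOE V T) (C : Finset V) (c : V) :
    AOE V T where
  verts := insert c (G.verts \ C)
  St t := if G.St t ∈ C then c else G.St t
  En t := if G.En t ∈ C then c else G.En t
  stMem t := mergeSetV_mem C c (G.St t) (G.stMem t)
  enMem t := mergeSetV_mem C c (G.En t) (G.enMem t)
  unl := G.unl.map fun e => (if e.1 ∈ C then c else e.1, if e.2 ∈ C then c else e.2)
  unlMem := by
    intro e he
    rw [Multiset.mem_map] at he
    obtain ⟨a, ha, rfl⟩ := he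
    obtain ⟨h1, h2⟩ := G.unlMem a ha
    exact ⟨mergeSetV_mem C c a.1 h1, mergeSetV_mem C c a.2 h2⟩

/-!
If `t` and `t'` shared a vertex in `Opt`, then, since equivalent AOEs have the same reachability
between tasks, every task reaching `t'` in `A` would reach every task reached from `t`. Follow a
path in `A` from `En t` to `St t'`. Its first edge cannot be a task, which would then reach
itself; so it is an unlabeled edge `(En t, v)`, and the reachability just described makes Rule 3
applicable to it (or Rule 2 to some other edge), although `A` is an output.

This rests on an invariant of the rules, true for canonical AOEs: acyclicity, and every
unlabeled edge leaves the end of a task or a vertex reaching everything, and enters the start of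
a task or a vertex reached from everything.
-/

open Relation

section RelationFacts

variable {α β : Type*} {R : α → α → Prop}

theorem not_transGen_map_self {f : α → β} {M : Set α} (hR : ∀ x, ¬TransGen R x x)
    (hf : ∀ x y, f x = f y → x = y ∨ x ∈ M ∧ y ∈ M) (hM : ∀ a ∈ M, ∀ b ∈ M, ¬TransGen R a b)
    (p : β) : ¬TransGen (Relation.Map R f f) p p := by
  -- a path in the quotient lifts to a path of `R` with at most one jump inside `M`
  have lift : ∀ {p q}, TransGen (Relation.Map R f f) p q → ∃ x y, f x = p ∧ f y = q ∧
      (TransGen R x y ∨ (∃ a ∈ M, ReflTransGen R x a) ∧ ∃ b ∈ M, TransGen R b y) := by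
    intro p q h
    induction h with
    | single h =>
      obtain ⟨x, y, hxy, rfl, rfl⟩ := h
      exact ⟨x, y, rfl, rfl, Or.inl (.single hxy)⟩
    | tail _ h ih =>
      obtain ⟨c, d, hcd, hc, rfl⟩ := h
      obtain ⟨x, y, rfl, hy, hxy⟩ := ih
      refine ⟨x, d, rfl, rfl, ?_⟩
      rcases hf y c (hy.trans hc.symm) with rfl | ⟨hyM, hcM⟩
      · rcases hxy with hxy | ⟨hx, b, hb, hby⟩
        · exact Or.inl (hxy.tail hcd)
        · exact Or.inr ⟨hx, b, hb, hby.tail hcd⟩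
      · rcases hxy with hxy | ⟨-, b, hb, hby⟩
        · exact Or.inr ⟨⟨y, hyM, hxy.to_reflTransGen⟩, c, hcM, .single hcd⟩
        · exact (hM b hb y hyM hby).elim
  intro h
  obtain ⟨x, y, hx, hy, hxy⟩ := lift h
  rcases hf x y (hx.trans hy.symm) with rfl | ⟨hxM, hyM⟩
  · rcases hxy with hxx | ⟨⟨a, ha, hxa⟩, b, hb, hbx⟩
    · exact hR x hxx
    · exact hM b hb a ha (hbx.trans_left hxa)
  · rcases hxy with hxy | ⟨-, b, hb, hby⟩
    · exact hM x hxM y hyM hxy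
    · exact hM b hb y hyM hby

theorem not_transGen_of_forall_iff_left {u v : α} (hR : ∀ x, ¬TransGen R x x)
    (h : ∀ w, R u w ↔ R v w) : ¬TransGen R u v := by
  intro huv
  obtain ⟨w, huw, hwv⟩ := TransGen.head'_iff.mp huv
  exact hR v (.head' ((h w).mp huw) hwv)

theorem not_transGen_of_forall_iff_right {u v : α} (hR : ∀ x, ¬TransGen R x x)
    (h : ∀ w, R w u ↔ R w v) : ¬TransGen R u v := fun huv =>
  not_transGen_of_forall_iff_left (R := Function.swap R)
    (fun x hx => hR x (transGen_swap.mp hx)) (fun w => (h w).symm) (transGen_swap.mpr huv)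

theorem reflTransGen_of_forall_exists_pred {S : Finset α} {s : α} (hR : ∀ x, ¬TransGen R x x)
    (hpred : ∀ x ∈ S, x ≠ s → ∃ y ∈ S, R y x) : ∀ x ∈ S, ReflTransGen R s x := by
  let r : S → S → Prop := fun x y => TransGen R x y
  have : IsTrans S r := ⟨fun _ _ _ hab hbc => hab.trans hbc⟩
  have : Std.Irrefl r := ⟨fun x hx => hR x hx⟩
  suffices ∀ x : S, ReflTransGen R s x from fun x hx => this ⟨x, hx⟩
  intro x
  induction x using (Finite.wellFounded_of_trans_of_irrefl r).induction with
  | _ x ih =>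
    by_cases hx : (x : α) = s
    · exact hx ▸ .refl
    · obtain ⟨y, hyS, hyx⟩ := hpred x x.2 hx
      exact (ih ⟨y, hyS⟩ (.single hyx)).tail hyx

end RelationFacts

namespace AOE

variable {V W T : Type}

theorem adj_task (G : AOE V T) (t : T) : G.adj (G.St t) (G.En t) := Or.inr ⟨t, rfl, rfl⟩

theorem adj_mem {G : AOE V T} {a b : V} (h : G.adj a b) : a ∈ G.verts ∧ b ∈ G.verts := by
  rcases h with h | ⟨t, rfl, rfl⟩
  · exact G.unlMem _ h
  · exact ⟨G.stMem t, G.enMem t⟩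

theorem ne_of_reach {G : AOE V T} (hG : G.Acyclic) {a b : T} (h : G.reach a b) : a ≠ b := by
  rintro rfl
  exact hG _ (.tail' h (G.adj_task a))

theorem reach_trans {G : AOE V T} {a b c : T} (hab : G.reach a b) (hbc : G.reach b c) :
    G.reach a c :=
  hab.trans (hbc.head (G.adj_task b))

theorem chain.pairwise_reach {G : AOE V T} {l : List T} (hl : G.chain l) :
    l.Pairwise G.reach := by
  have : Trans G.reach G.reach G.reach := ⟨reach_trans⟩
  exact (hl.imp fun _ _ h => h.2).pairwise

theorem chain.nodup {G : AOE V T} (hG : G.Acyclic) {l : List T} (hl : G.chain l) : l.Nodup :=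
  hl.pairwise_reach.imp (ne_of_reach hG)

theorem exists_critPath_sublist [Fintype T] {G : AOE V T} (hG : G.Acyclic) {l : List T}
    (hl : G.chain l) : ∃ l', G.critPath l' ∧ l.Sublist l' := by
  by_cases hcp : G.critPath l
  · exact ⟨l, hcp, .refl l⟩
  obtain ⟨l'', hl'', hsub, hne⟩ : ∃ l'', G.chain l'' ∧ l.Sublist l'' ∧ l'' ≠ l := by
    simpa [critPath, hl] using hcp
  have hlen : l.length < l''.length :=
    lt_of_le_of_ne hsub.length_le fun h => hne (hsub.eq_of_length h).symm
  have hcard : l''.length ≤ Fintype.card T := (hl''.nodup hG).length_le_card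
  obtain ⟨l', hl', hsub'⟩ := exists_critPath_sublist hG hl''
  exact ⟨l', hl', hsub.trans hsub'⟩
termination_by Fintype.card T - l.length

theorem Equiv.symm {G : AOE V T} {H : AOE W T} (h : G.Equiv H) : H.Equiv G :=
  fun l => (h l).symm

/-- `[a, b]` extends to a potential critical path of `G`, which `H` shares. -/
theorem Equiv.reach [Fintype T] {G : AOE V T} {H : AOE W T} (hG : G.Acyclic) (hGH : G.Equiv H)
    {a b : T} (h : G.reach a b) : H.reach a b := by
  obtain ⟨l, hl, hsub⟩ :=
    exists_critPath_sublist hG (l := [a, b]) (List.isChain_pair.mpr ⟨ne_of_reach hG h, h⟩)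
  exact List.pairwise_pair.mp (((hGH l).mp hl).1.pairwise_reach.sublist hsub)

/-- Each simplification rule turns its input `G` into an image `H` of `G` in this sense. -/
structure IsImage (f : V → V) (G H : AOE V T) : Prop where
  st : ∀ t, H.St t = f (G.St t)
  en : ∀ t, H.En t = f (G.En t)
  unl : ∀ e ∈ H.unl, ∃ x y, (x, y) ∈ G.unl ∧ (f x, f y) = e
  verts : ∀ w ∈ H.verts, ∃ x ∈ G.verts, f x = w
  adj : ∀ x y, G.adj x y → ReflTransGen H.adj (f x) (f y)

theorem IsImage.reflTransGen {f : V → V} {G H : AOE V T} (hf : G.IsImage f H) {x y : V}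
    (h : ReflTransGen G.adj x y) : ReflTransGen H.adj (f x) (f y) := by
  induction h with
  | refl => exact .refl
  | tail _ hyz ih => exact ih.trans (hf.adj _ _ hyz)

def UnlTailCond (G : AOE V T) : Prop :=
  ∀ a b, (a, b) ∈ G.unl → (∃ s, G.En s = a) ∨ ∀ w ∈ G.verts, ReflTransGen G.adj a w

def UnlHeadCond (G : AOE V T) : Prop :=
  ∀ a b, (a, b) ∈ G.unl → (∃ s, G.St s = b) ∨ ∀ w ∈ G.verts, ReflTransGen G.adj w b

theorem IsImage.unlTailCond {f : V → V} {G H : AOE V T} (hf : G.IsImage f H)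
    (hG : G.UnlTailCond) : H.UnlTailCond := by
  intro a b hab
  obtain ⟨x, y, hxy, he⟩ := hf.unl _ hab
  obtain ⟨rfl, rfl⟩ := Prod.mk.inj he
  rcases hG x y hxy with ⟨s, rfl⟩ | hx
  · exact Or.inl ⟨s, hf.en s⟩
  · refine Or.inr fun w hw => ?_
    obtain ⟨z, hz, rfl⟩ := hf.verts w hw
    exact hf.reflTransGen (hx z hz)

theorem IsImage.unlHeadCond {f : V → V} {G H : AOE V T} (hf : G.IsImage f H)
    (hG : G.UnlHeadCond) : H.UnlHeadCond := by
  intro a b hab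
  obtain ⟨x, y, hxy, he⟩ := hf.unl _ hab
  obtain ⟨rfl, rfl⟩ := Prod.mk.inj he
  rcases hG x y hxy with ⟨s, rfl⟩ | hy
  · exact Or.inl ⟨s, hf.st s⟩
  · refine Or.inr fun w hw => ?_
    obtain ⟨z, hz, rfl⟩ := hf.verts w hw
    exact hf.reflTransGen (hy z hz)

structure StepInvariant (G : AOE V T) : Prop where
  acyclic : G.Acyclic
  unlTail : G.UnlTailCond
  unlHead : G.UnlHeadCond

theorem StepInvariant.of_isImage {f : V → V} {G H : AOE V T} (hG : G.StepInvariant)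
    (hH : H.Acyclic) (hf : G.IsImage f H) : H.StepInvariant :=
  ⟨hH, hf.unlTailCond hG.unlTail, hf.unlHeadCond hG.unlHead⟩

end AOE

section Simplification

variable {V T : Type} [DecidableEq V]

theorem mergeV_eq_mergeV {u v x y : V} (h : mergeV u v x = mergeV u v y) :
    x = y ∨ x ∈ ({u, v} : Set V) ∧ y ∈ ({u, v} : Set V) := by
  unfold mergeV at h
  split_ifs at h <;> simp_all

theorem AOE.merge_adj_eq_map (G : AOE V T) (u v : V) :
    (G.merge u v).adj = Relation.Map G.adj (mergeV u v) (mergeV u v) := by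
  funext p q
  apply propext
  constructor
  · rintro (h | ⟨t, rfl, rfl⟩)
    · obtain ⟨⟨x, y⟩, hxy, he⟩ := Multiset.mem_map.mp h
      exact ⟨x, y, Or.inl hxy, congrArg Prod.fst he, congrArg Prod.snd he⟩
    · exact ⟨_, _, G.adj_task t, rfl, rfl⟩
  · rintro ⟨x, y, h | ⟨t, rfl, rfl⟩, rfl, rfl⟩
    · exact Or.inl (Multiset.mem_map.mpr ⟨(x, y), h, rfl⟩)
    · exact (G.merge u v).adj_task t

theorem AOE.adj_of_adj_delUnl {G : AOE V T} {u v a b : V} (h : (G.delUnl u v).adj a b) :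
    G.adj a b :=
  h.imp_left Multiset.mem_of_mem_erase

theorem AOE.adj_delUnl_of_ne {G : AOE V T} {u v a b : V} (h : G.adj a b)
    (hne : (a, b) ≠ (u, v)) : (G.delUnl u v).adj a b :=
  h.imp_left (Multiset.mem_erase_of_ne hne).mpr

theorem AOE.Acyclic.delUnl {G : AOE V T} (hG : G.Acyclic) (u v : V) : (G.delUnl u v).Acyclic :=
  fun w hw => hG w (TransGen.mono (fun _ _ => AOE.adj_of_adj_delUnl) _ _ hw)

theorem AOE.Acyclic.merge {G : AOE V T} (hG : G.Acyclic) {u v : V}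
    (huv : ¬TransGen G.adj u v) (hvu : ¬TransGen G.adj v u) : (G.merge u v).Acyclic := by
  intro p
  rw [AOE.merge_adj_eq_map]
  refine not_transGen_map_self hG (fun _ _ => mergeV_eq_mergeV) ?_ p
  rintro a (rfl | rfl) b (rfl | rfl)
  exacts [hG _, huv, hvu, hG _]

theorem Rule1OutCond.acyclic_merge {G : AOE V T} {u v : V} (hc : Rule1OutCond G u v)
    (hG : G.Acyclic) : (G.merge u v).Acyclic :=
  hG.merge (not_transGen_of_forall_iff_left hG hc.2.2.2.2.2)
    (not_transGen_of_forall_iff_left hG fun w => (hc.2.2.2.2.2 w).symm)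

theorem Rule1InCond.acyclic_merge {G : AOE V T} {u v : V} (hc : Rule1InCond G u v)
    (hG : G.Acyclic) : (G.merge u v).Acyclic :=
  hG.merge (not_transGen_of_forall_iff_right hG hc.2.2.2.2.2)
    (not_transGen_of_forall_iff_right hG fun w => (hc.2.2.2.2.2 w).symm)

theorem Rule3Cond.acyclic_merge {G : AOE V T} {u v : V} (hc : Rule3Cond G u v)
    (hG : G.Acyclic) : ((G.delUnl u v).merge u v).Acyclic :=
  (hG.delUnl u v).merge hc.2.1 fun hvu => hG u <| .head' (Or.inl hc.1)
    (TransGen.mono (fun _ _ => AOE.adj_of_adj_delUnl) _ _ hvu).to_reflTransGen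

theorem AOE.isImage_merge {G : AOE V T} {u : V} (hu : u ∈ G.verts) (v : V) :
    G.IsImage (mergeV u v) (G.merge u v) where
  st _ := rfl
  en _ := rfl
  unl e he := by
    obtain ⟨⟨x, y⟩, hxy, rfl⟩ := Multiset.mem_map.mp he
    exact ⟨x, y, hxy, rfl⟩
  verts w hw := by
    rcases Finset.mem_insert.mp hw with rfl | hw
    · exact ⟨w, hu, by simp [mergeV]⟩
    · exact ⟨w, (Finset.mem_erase.mp hw).2, if_neg (Finset.mem_erase.mp hw).1⟩
  adj x y h := .single (G.merge_adj_eq_map u v ▸ ⟨x, y, h, rfl, rfl⟩)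

theorem AOE.isImage_delUnl {G : AOE V T} {u v : V} (hp : TransGen (G.delUnl u v).adj u v) :
    G.IsImage id (G.delUnl u v) where
  st _ := rfl
  en _ := rfl
  unl e he := ⟨e.1, e.2, Multiset.mem_of_mem_erase he, rfl⟩
  verts w hw := ⟨w, hw, rfl⟩
  adj x y h := by
    by_cases he : (x, y) = (u, v)
    · obtain ⟨rfl, rfl⟩ := Prod.mk.inj he
      exact hp.to_reflTransGen
    · exact .single (G.adj_delUnl_of_ne h he)

theorem AOE.isImage_delUnl_merge {G : AOE V T} {u : V} (hu : u ∈ G.verts) (v : V) :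
    G.IsImage (mergeV u v) ((G.delUnl u v).merge u v) where
  st _ := rfl
  en _ := rfl
  unl e he := by
    obtain ⟨x, y, hxy, rfl⟩ := (AOE.isImage_merge (G := G.delUnl u v) hu v).unl e he
    exact ⟨x, y, Multiset.mem_of_mem_erase hxy, rfl⟩
  verts := (AOE.isImage_merge (G := G.delUnl u v) hu v).verts
  adj x y h := by
    by_cases he : (x, y) = (u, v)
    · obtain ⟨rfl, rfl⟩ := Prod.mk.inj he
      simpa [mergeV] using ReflTransGen.refl
    · exact (AOE.isImage_merge (G := G.delUnl u v) hu v).adj x y (G.adj_delUnl_of_ne h he)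

theorem AOE.StepInvariant.step {G H : AOE V T} (hG : G.StepInvariant) (h : Step G H) :
    H.StepInvariant := by
  cases h with
  | rule1out u v hc => exact hG.of_isImage (hc.acyclic_merge hG.acyclic) (G.isImage_merge hc.1 v)
  | rule1in u v hc => exact hG.of_isImage (hc.acyclic_merge hG.acyclic) (G.isImage_merge hc.1 v)
  | rule2 u v hc => exact hG.of_isImage (hG.acyclic.delUnl u v) (G.isImage_delUnl hc.2)
  | rule3 u v hc =>
    exact hG.of_isImage (hc.acyclic_merge hG.acyclic) (G.isImage_delUnl_merge (G.unlMem _ hc.1).1 v)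

theorem AOE.StepInvariant.of_reflTransGen {G H : AOE V T} (hG : G.StepInvariant)
    (h : ReflTransGen Step G H) : H.StepInvariant := by
  induction h with
  | refl => exact hG
  | tail _ hstep ih => exact ih.step hstep

end Simplification

theorem Canonical.stepInvariant {V T : Type} [DecidableEq V] [Fintype T] {G : AOE V T}
    (h : Canonical G) : G.StepInvariant := by
  obtain ⟨hG, -, -, -, -, s, e, -, hs, he, -, hverts, hmid, hsrc, hsnk⟩ := h
  have hcover : ∀ x ∈ G.verts, x = s ∨ x = e ∨ (∃ t, G.St t = x) ∨ ∃ t, G.En t = x := by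
    intro x hx
    simpa [hverts] using hx
  -- a vertex without entering edge would have received one from `s`
  have hpred : ∀ b ∈ G.verts, b ≠ s → ∃ a ∈ G.verts, G.adj a b := by
    intro b hb hbs
    by_cases hen : ∃ t, G.En t = b
    · obtain ⟨t, rfl⟩ := hen
      exact ⟨_, G.stMem t, G.adj_task t⟩
    push Not at hen
    by_contra hno
    push Not at hno
    exact hno s hs (Or.inl ((hsrc b).mpr
      ⟨hb, hbs, hen, fun a ha => (hno a (G.unlMem _ ha).1 (Or.inl ha)).elim⟩))
  have hsucc : ∀ a ∈ G.verts, a ≠ e → ∃ b ∈ G.verts, G.adj a b := by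
    intro a ha hae
    by_cases hst : ∃ t, G.St t = a
    · obtain ⟨t, rfl⟩ := hst
      exact ⟨_, G.enMem t, G.adj_task t⟩
    push Not at hst
    by_contra hno
    push Not at hno
    exact hno e he (Or.inl ((hsnk a).mpr
      ⟨ha, hae, hst, fun b hb => (hno b (G.unlMem _ hb).2 (Or.inl hb)).elim⟩))
  have hfrom : ∀ x ∈ G.verts, ReflTransGen G.adj s x :=
    reflTransGen_of_forall_exists_pred hG hpred
  have hto : ∀ x ∈ G.verts, ReflTransGen G.adj x e := fun x hx =>
    reflTransGen_swap.mp (reflTransGen_of_forall_exists_pred (R := Function.swap G.adj)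
      (fun y hy => hG y (transGen_swap.mp hy)) hsucc x hx)
  refine ⟨hG, fun a b hab => ?_, fun a b hab => ?_⟩
  · by_cases has : a = s
    · exact Or.inr (has ▸ hfrom)
    by_cases hbe : b = e
    · subst hbe
      obtain ⟨ha, hae, hst, -⟩ := (hsnk a).mp hab
      rcases hcover a ha with h | h | ⟨t, rfl⟩ | h
      exacts [(has h).elim, (hae h).elim, (hst t rfl).elim, Or.inl h]
    · exact Or.inl (hmid a b hab has hbe).1
  · by_cases hbe : b = e
    · exact Or.inr (hbe ▸ hto)
    by_cases has : a = s
    · subst has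
      obtain ⟨hb, hba, hen, -⟩ := (hsrc b).mp hab
      rcases hcover b hb with h | h | h | ⟨t, rfl⟩
      exacts [(hba h).elim, (hbe h).elim, Or.inl h, (hen t rfl).elim]
    · exact Or.inl (hmid a b hab has hbe).2

namespace AOE

variable {V W T : Type}

def Upstream (A : AOE V T) (t' : T) (x : V) : Prop :=
  (∀ y ∈ A.verts, ReflTransGen A.adj x y) ∨ ∃ s, ReflTransGen A.adj x (A.En s) ∧ A.reach s t'

def Downstream (A : AOE V T) (t : T) (y : V) : Prop :=
  (∀ x ∈ A.verts, ReflTransGen A.adj x y) ∨ ∃ r, A.reach t r ∧ ReflTransGen A.adj (A.St r) y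

theorem Equiv.reach_trans_of_en_eq_st [Fintype T] {A : AOE V T} {H : AOE W T}
    (hA : A.Acyclic) (hH : H.Acyclic) (hAH : A.Equiv H) {t t' : T} (htt' : H.En t = H.St t')
    {s r : T} (hs : A.reach s t') (hr : A.reach t r) : A.reach s r := by
  have hr' : ReflTransGen H.adj (H.St t') (H.St r) := htt' ▸ hAH.reach hA hr
  exact hAH.symm.reach hH ((hAH.reach hA hs).trans hr')

theorem reflTransGen_of_upstream_of_downstream {A : AOE V T} {t t' : T}
    (hglue : ∀ s r, A.reach s t' → A.reach t r → A.reach s r) {x y : V}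
    (hx : A.Upstream t' x) (hy : A.Downstream t y) (hxA : x ∈ A.verts) (hyA : y ∈ A.verts) :
    ReflTransGen A.adj x y := by
  rcases hx with hx | ⟨s, hxs, hs⟩
  · exact hx y hyA
  rcases hy with hy | ⟨r, hr, hry⟩
  · exact hy x hxA
  exact hxs.trans ((hglue s r hs hr).trans hry)

theorem UnlTailCond.upstream {A : AOE V T} (hA : A.UnlTailCond) {t' : T} {w x : V}
    (hwx : A.adj w x) (hx : ReflTransGen A.adj x (A.St t')) : A.Upstream t' w := by
  rcases hwx with hwx | ⟨s, rfl, rfl⟩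
  · rcases hA w x hwx with ⟨s, rfl⟩ | hw
    · exact Or.inr ⟨s, .refl, hx.head (Or.inl hwx)⟩
    · exact Or.inl hw
  · exact Or.inr ⟨s, .single (A.adj_task s), hx⟩

theorem UnlHeadCond.downstream {A : AOE V T} (hA : A.UnlHeadCond) {t : T} {y z : V}
    (hy : ReflTransGen A.adj (A.En t) y) (hyz : A.adj y z) : A.Downstream t z := by
  rcases hyz with hyz | ⟨r, rfl, rfl⟩
  · rcases hA y z hyz with ⟨r, rfl⟩ | hz
    · exact Or.inr ⟨r, hy.tail (Or.inl hyz), .refl⟩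
    · exact Or.inl hz
  · exact Or.inr ⟨r, hy, .single (A.adj_task r)⟩

end AOE

section OutputAOE

variable {V T : Type} [DecidableEq V]

theorem AOE.reflTransGen_delUnl_of_head_not_reach {G : AOE V T} {a b x y : V}
    (h : ReflTransGen G.adj x y) (hb : ¬ReflTransGen G.adj b y) :
    ReflTransGen (G.delUnl a b).adj x y := by
  induction h using ReflTransGen.head_induction_on with
  | refl => exact .refl
  | head hxz hzy ih =>
    refine ih.head (G.adj_delUnl_of_ne hxz fun he => hb ?_)
    obtain ⟨-, rfl⟩ := Prod.mk.inj he
    exact hzy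

theorem AOE.reflTransGen_delUnl_of_not_reach_tail {G : AOE V T} {a b x y : V}
    (h : ReflTransGen G.adj x y) (ha : ¬ReflTransGen G.adj x a) :
    ReflTransGen (G.delUnl a b).adj x y := by
  induction h with
  | refl => exact .refl
  | tail hxz hzy ih =>
    refine ih.tail (G.adj_delUnl_of_ne hzy fun he => ha ?_)
    obtain ⟨rfl, -⟩ := Prod.mk.inj he
    exact hxz

/-- By acyclicity, the path through `m` cannot itself use the edge `(w, q)`. -/
theorem AOE.Acyclic.rule2Cond {G : AOE V T} (hG : G.Acyclic) {w m q : V} (hwq : (w, q) ∈ G.unl)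
    (hwm : TransGen G.adj w m) (hmq : TransGen G.adj m q) : Rule2Cond G w q := by
  have h1 : ReflTransGen (G.delUnl w q).adj w m :=
    G.reflTransGen_delUnl_of_head_not_reach hwm.to_reflTransGen
      fun hqm => hG m (hmq.trans_left hqm)
  have h2 : ReflTransGen (G.delUnl w q).adj m q :=
    G.reflTransGen_delUnl_of_not_reach_tail hmq.to_reflTransGen
      fun hmw => hG w (hwm.trans_left hmw)
  refine ⟨hwq, (reflTransGen_iff_eq_or_transGen.mp (h1.trans h2)).resolve_left ?_⟩
  rintro rfl
  exact hG q (hwm.trans hmq)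

theorem AOE.StepInvariant.rule3Cond {A : AOE V T} (hA : A.StepInvariant)
    (hR2 : ∀ u v, ¬Rule2Cond A u v) {t t' : T}
    (hglue : ∀ s r, A.reach s t' → A.reach t r → A.reach s r) {v : V}
    (huv : (A.En t, v) ∈ A.unl) (hv : ReflTransGen A.adj v (A.St t')) :
    Rule3Cond A (A.En t) v := by
  have hconn : ∀ {x y}, A.Upstream t' x → A.Downstream t y → x ∈ A.verts → y ∈ A.verts →
      ReflTransGen A.adj x y := A.reflTransGen_of_upstream_of_downstream hglue
  have hup : ∀ w, A.adj w v → A.Upstream t' w := fun w hw => hA.unlTail.upstream hw hv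
  have hdown : ∀ z, A.adj (A.En t) z → A.Downstream t z :=
    fun z hz => hA.unlHead.downstream .refl hz
  have hno : ∀ s r, A.St s = A.En t → A.En r = v → False := by
    intro s r hs hr
    have hrs : A.reach r s := hglue r s (by rwa [AOE.reach, hr]) (by rw [AOE.reach, hs])
    rw [AOE.reach, hr, hs] at hrs
    exact hA.acyclic _ (.tail' hrs (Or.inl huv))
  refine ⟨huv, fun h => hR2 _ _ ⟨huv, h⟩, fun ⟨s, hs⟩ => ⟨fun r hr => hno s r hs hr, ?_⟩,
    fun ⟨r, hr⟩ => ⟨fun s hs => hno s r hs hr, ?_⟩,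
    fun w z hw hz => hconn (hup w hw) (hdown z hz) (A.adj_mem hw).1 (A.adj_mem hz).2⟩
  · intro w hw
    by_contra hne
    have hwu : ReflTransGen A.adj w (A.En t) :=
      hconn (hup w (Or.inl hw)) (Or.inr ⟨s, by rw [AOE.reach, hs], by rw [hs]⟩)
        (A.unlMem _ hw).1 (A.enMem t)
    exact hR2 _ _ (hA.acyclic.rule2Cond hw
      ((reflTransGen_iff_eq_or_transGen.mp hwu).resolve_left fun h => hne h.symm)
      (.single (Or.inl huv)))
  · intro w hw
    by_contra hne
    have hvw : ReflTransGen A.adj v w :=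
      hconn (Or.inr ⟨r, by rw [hr], by rwa [AOE.reach, hr]⟩) (hdown w (Or.inl hw))
        (A.unlMem _ huv).2 (A.unlMem _ hw).2
    exact hR2 _ _ (hA.acyclic.rule2Cond hw (.single (Or.inl huv))
      ((reflTransGen_iff_eq_or_transGen.mp hvw).resolve_left hne))

end OutputAOE

theorem stmt10_general {V W T : Type} [DecidableEq V] [Fintype T]
    (G A : AOE V T) (hA : IsOutput G A)
    (Opt : AOE W T) (hAc : Opt.Acyclic) (hEq : AOE.Equiv A Opt) :
    ∀ t t' : T, t ≠ t' → A.En t ≠ A.St t' → Opt.En t ≠ Opt.St t' := by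
  intro t t' _ hne hOpt
  obtain ⟨hcan, hsteps, hfinal⟩ := hA
  have hinv : A.StepInvariant := hcan.stepInvariant.of_reflTransGen hsteps
  have hglue : ∀ s r, A.reach s t' → A.reach t r → A.reach s r :=
    fun _ _ => hEq.reach_trans_of_en_eq_st hinv.acyclic hAc hOpt
  have hreach : A.reach t t' := hEq.symm.reach hAc (by rw [AOE.reach, hOpt])
  rcases hreach.cases_head with h | ⟨v, h | ⟨s, hs, hsv⟩, hv⟩
  · exact hne h
  · exact hfinal _ (.rule3 _ _ (hinv.rule3Cond (fun u v h => hfinal _ (.rule2 u v h)) hglue h hv))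
  · have hss : A.reach s s := hglue s s (by rwa [AOE.reach, hsv]) (by rw [AOE.reach, hs])
    exact AOE.ne_of_reach hinv.acyclic hss rfl

/-- For an output AOE `A` and an optimal AOE `Opt ≡ A`: if the end vertex
of `T` differs from the start vertex of `T'` in `A`, the same holds in `Opt`. -/
theorem stmt10 {V W T : Type} [DecidableEq V] [Fintype T]
    (G A : AOE V T) (hA : IsOutput G A)
    (Opt : AOE W T) (hAc : Opt.Acyclic) (hOpt : Optimal Opt) (hEq : AOE.Equiv A Opt) :
    ∀ t t' : T, t ≠ t' → A.En t ≠ A.St t' → Opt.En t ≠ Opt.St t' :=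
  stmt10_general G A hA Opt hAc hEq

end AOEPaper
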